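/- arXiv:2104.11588 — 5 statements merged into one kernel-verified Lean document; each statement's English description precedes it below -/
import Mathlib

section
/- Let 0<λ≤1 and f(z) = z/((1-ω(z))(1-λω(z))) for a Schwarz function ω with coefficients c₁,c₂,c₃. If f⁻¹(w)=w+A₂w²+A₃w³+A₄w⁴+⋯ is the local inverse of f at 0, then A₂=-(1+λ)c₁, A₃=-(1+λ)c₂+(1+3λ+λ²)c₁², and A₄=-(1+λ)c₃+(3+8λ+3λ²)c₁c₂-(1+λ)(1+5λ+λ²)c₁³. -/
/-!
Near `0` the relation `f (g w) = w` reads `g w = w * (1 - φ w) * (1 - λ φ w)` with `φ = ω ∘ g`.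
By Leibniz' rule the `(n + 1)`-st derivative of the right-hand side at `0` only involves
derivatives of `φ` of order `≤ n`, and by Faà di Bruno these are derivatives of `ω` at `0` and
derivatives of `g` of order `≤ n`. This triangular system determines `g''(0)`, `g'''(0)`,
`g⁗(0)` successively. The denominator of `f` does not vanish on the unit disc because
`‖λ ω‖ < 1`.
-/

open Metric Filter Topology

section Derivatives

variable {𝕜 : Type*} [NontriviallyNormedField 𝕜]

open Finset in
theorem iteratedDeriv_succ_mul_id_zero {ψ : 𝕜 → 𝕜} {n : ℕ} (hψ : ContDiffAt 𝕜 (n + 1) ψ 0) :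
    iteratedDeriv (n + 1) (fun w => w * ψ w) 0 = (n + 1) * iteratedDeriv n ψ 0 := by
  rw [iteratedDeriv_fun_mul (f := fun w => w) contDiffAt_id hψ, sum_eq_single 1]
  · simp
  · intro i _ hi
    simp [iteratedDeriv_fun_id, hi]
  · simp

open Finset in
theorem iteratedDeriv_one_sub_mul_one_sub {φ : 𝕜 → 𝕜} {x : 𝕜} (hφ : ContDiffAt 𝕜 3 φ x)
    (hφx : φ x = 0) (c : 𝕜) :
    deriv (fun z => (1 - φ z) * (1 - c * φ z)) x = -(1 + c) * deriv φ x ∧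
    iteratedDeriv 2 (fun z => (1 - φ z) * (1 - c * φ z)) x =
      -(1 + c) * iteratedDeriv 2 φ x + 2 * c * deriv φ x ^ 2 ∧
    iteratedDeriv 3 (fun z => (1 - φ z) * (1 - c * φ z)) x =
      -(1 + c) * iteratedDeriv 3 φ x + 6 * c * deriv φ x * iteratedDeriv 2 φ x := by
  have h₁ : ContDiffAt 𝕜 3 (fun z => 1 - φ z) x := contDiffAt_const.sub hφ
  have h₂ : ContDiffAt 𝕜 3 (fun z => 1 - c * φ z) x :=
    contDiffAt_const.sub (contDiffAt_const.mul hφ)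
  refine ⟨?_, ?_, ?_⟩
  all_goals
    rw [← iteratedDeriv_one,
      iteratedDeriv_fun_mul (h₁.of_le (by norm_num)) (h₂.of_le (by norm_num))]
    simp [sum_range_succ, iteratedDeriv_const_sub, hφx]
    ring

theorem iteratedDeriv_of_eventuallyEq_mul_one_sub_mul_one_sub {ω g : 𝕜 → 𝕜} (c : 𝕜)
    (hω : ContDiffAt 𝕜 4 ω 0) (hg : ContDiffAt 𝕜 4 g 0) (hω0 : ω 0 = 0) (hg0 : g 0 = 0)
    (h : g =ᶠ[𝓝 0] fun w => w * ((1 - ω (g w)) * (1 - c * ω (g w)))) :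
    iteratedDeriv 2 g 0 = -2 * (1 + c) * deriv ω 0 ∧
    iteratedDeriv 3 g 0 =
      -3 * (1 + c) * iteratedDeriv 2 ω 0 + 6 * (1 + 3 * c + c ^ 2) * deriv ω 0 ^ 2 ∧
    iteratedDeriv 4 g 0 = -4 * (1 + c) * iteratedDeriv 3 ω 0
      + 12 * (3 + 8 * c + 3 * c ^ 2) * deriv ω 0 * iteratedDeriv 2 ω 0
      - 24 * (1 + c) * (1 + 5 * c + c ^ 2) * deriv ω 0 ^ 3 := by
  rw [← hg0] at hω
  set φ := ω ∘ g
  have hφ : ContDiffAt 𝕜 4 φ 0 := hω.comp 0 hg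
  have hφ0 : φ 0 = 0 := by simp [φ, hg0, hω0]
  obtain ⟨hψ₁, hψ₂, hψ₃⟩ := iteratedDeriv_one_sub_mul_one_sub (hφ.of_le (by norm_num)) hφ0 c
  have hg_succ (n : ℕ) (hn : n ≤ 3) : iteratedDeriv (n + 1) g 0 =
      (n + 1) * iteratedDeriv n (fun w => (1 - φ w) * (1 - c * φ w)) 0 :=
    (h.iteratedDeriv_eq _).trans <| iteratedDeriv_succ_mul_id_zero <|
      ((contDiffAt_const.sub hφ).mul (contDiffAt_const.sub (contDiffAt_const.mul hφ))).of_le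
        (by exact_mod_cast Nat.succ_le_succ hn)
  have hg₁ : deriv g 0 = 1 := by simpa [hφ0] using hg_succ 0 (by norm_num)
  have hφ₁ : deriv φ 0 = deriv ω 0 := by
    rw [deriv_comp 0 (hω.differentiableAt (by norm_num)) (hg.differentiableAt (by norm_num)),
      hg0, hg₁, mul_one]
  have hg₂ : iteratedDeriv 2 g 0 = -2 * (1 + c) * deriv ω 0 :=
    (hg_succ 1 (by norm_num)).trans (by rw [iteratedDeriv_one, hψ₁, hφ₁]; ring)
  have hφ₂ : iteratedDeriv 2 φ 0 = iteratedDeriv 2 ω 0 - 2 * (1 + c) * deriv ω 0 ^ 2 := by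
    rw [iteratedDeriv_comp_two (hω.of_le (by norm_num)) (hg.of_le (by norm_num)), hg0, hg₁, hg₂]
    ring
  have hg₃ : iteratedDeriv 3 g 0 =
      -3 * (1 + c) * iteratedDeriv 2 ω 0 + 6 * (1 + 3 * c + c ^ 2) * deriv ω 0 ^ 2 :=
    (hg_succ 2 (by norm_num)).trans (by rw [hψ₂, hφ₁, hφ₂]; ring)
  have hφ₃ : iteratedDeriv 3 φ 0 = iteratedDeriv 3 ω 0
      - 9 * (1 + c) * deriv ω 0 * iteratedDeriv 2 ω 0
      + 6 * (1 + 3 * c + c ^ 2) * deriv ω 0 ^ 3 := by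
    rw [iteratedDeriv_comp_three (hω.of_le (by norm_num)) (hg.of_le (by norm_num)), hg0, hg₁,
      hg₂, hg₃]
    ring
  exact ⟨hg₂, hg₃, (hg_succ 3 (by norm_num)).trans (by rw [hψ₃, hφ₁, hφ₂, hφ₃]; ring)⟩

end Derivatives

theorem one_sub_mul_one_sub_mul_ne_zero {𝕜 : Type*} [NormedDivisionRing 𝕜] {z c : 𝕜}
    (hz : ‖z‖ < 1) (hc : ‖c‖ ≤ 1) : (1 - z) * (1 - c * z) ≠ 0 := by
  have h_one_sub {u : 𝕜} (hu : ‖u‖ < 1) : 1 - u ≠ 0 :=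
    sub_ne_zero.2 fun h => by simp [← h] at hu
  refine mul_ne_zero (h_one_sub hz) (h_one_sub ?_)
  calc ‖c * z‖ = ‖c‖ * ‖z‖ := norm_mul c z
    _ ≤ ‖z‖ := mul_le_of_le_one_left (norm_nonneg z) hc
    _ < 1 := hz

theorem eventuallyEq_mul_of_comp_eq_div {α : Type*} [GroupWithZero α] {f g D : α → α}
    {s : Set α} {l : Filter α} (hf : ∀ z ∈ s, f z = z / D z) (hD : ∀ z ∈ s, D z ≠ 0)
    (hgs : ∀ᶠ w in l, g w ∈ s) (hinv : ∀ᶠ w in l, f (g w) = w) :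
    g =ᶠ[l] fun w => w * D (g w) := by
  filter_upwards [hgs, hinv] with w hw hfw
  calc g w = g w / D (g w) * D (g w) := (div_mul_cancel₀ _ (hD _ hw)).symm
    _ = w * D (g w) := by rw [← hf _ hw, hfw]

/-- Coefficients of the inverse of f(z) = z/((1-ω(z))(1-λω(z))) in terms of the
coefficients of the Schwarz function ω. -/
theorem inverse_coefficients_of_f (lam : ℝ) (hl0 : 0 < lam) (hl1 : lam ≤ 1)
    (ω : ℂ → ℂ)
    (hω : DifferentiableOn ℂ ω (ball (0:ℂ) 1))
    (h0 : ω 0 = 0)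
    (hb : ∀ z ∈ ball (0:ℂ) 1, ‖ω z‖ < 1)
    (c₁ c₂ c₃ : ℂ)
    (hc₁ : c₁ = deriv ω 0)
    (hc₂ : c₂ = iteratedDeriv 2 ω 0 / 2)
    (hc₃ : c₃ = iteratedDeriv 3 ω 0 / 6)
    (f g : ℂ → ℂ)
    (hf : ∀ z ∈ ball (0:ℂ) 1, f z = z / ((1 - ω z) * (1 - (lam:ℂ) * ω z)))
    (hg : AnalyticAt ℂ g 0) (hg0 : g 0 = 0)
    (hinv : ∀ᶠ w in nhds (0:ℂ), f (g w) = w)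
    (A₂ A₃ A₄ : ℂ)
    (hA₂ : A₂ = iteratedDeriv 2 g 0 / 2)
    (hA₃ : A₃ = iteratedDeriv 3 g 0 / 6)
    (hA₄ : A₄ = iteratedDeriv 4 g 0 / 24) :
    A₂ = -(1 + (lam:ℂ)) * c₁ ∧
    A₃ = -(1 + (lam:ℂ)) * c₂ + (1 + 3*(lam:ℂ) + (lam:ℂ)^2) * c₁ ^ 2 ∧
    A₄ = -(1 + (lam:ℂ)) * c₃ + (3 + 8*(lam:ℂ) + 3*(lam:ℂ)^2) * c₁ * c₂ -
      (1 + (lam:ℂ)) * (1 + 5*(lam:ℂ) + (lam:ℂ)^2) * c₁ ^ 3 := by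
  have hω₀ : AnalyticAt ℂ ω 0 := hω.analyticAt (ball_mem_nhds 0 one_pos)
  have hgs : ∀ᶠ w in 𝓝 0, g w ∈ ball (0:ℂ) 1 :=
    hg.continuousAt (by rw [hg0]; exact ball_mem_nhds 0 one_pos)
  have hlam : ‖(lam : ℂ)‖ ≤ 1 := by simpa [abs_of_pos hl0] using hl1
  have hg_eq := eventuallyEq_mul_of_comp_eq_div hf
    (fun z hz => one_sub_mul_one_sub_mul_ne_zero (hb z hz) hlam) hgs hinv
  obtain ⟨hg₂, hg₃, hg₄⟩ := iteratedDeriv_of_eventuallyEq_mul_one_sub_mul_one_sub (lam : ℂ)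
    hω₀.contDiffAt hg.contDiffAt h0 hg0 hg_eq
  subst hA₂ hA₃ hA₄ hc₁ hc₂ hc₃
  refine ⟨?_, ?_, ?_⟩
  · rw [hg₂]; ring
  · rw [hg₃]; ring
  · rw [hg₄]; ring
end

section
/- Let 0<λ≤1, f ∈ 𝒰(λ) with f(z)/z subordinate to 1/((1-z)(1-λz)), and let f⁻¹(w)=w+A₂w²+⋯ near 0. Then |A₂| ≤ 1+λ, and this bound is attained by f_λ(z)=z/((1-z)(1-λz)). -/
/-!
Write `v = ω ∘ g`. Inverting the subordination relation gives `g w = w (1 - v w)(1 - λ v w)`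
near `0`, so `g'(0) = 1` and `g''(0) = -2 (1 + λ) v'(0) = -2 (1 + λ) ω'(0)`; the Schwarz lemma
`|ω'(0)| ≤ 1` gives `|A₂| ≤ 1 + λ`. For `f_λ` the Schwarz function is the identity, so the
inverse satisfies the same relation with `v` the inverse itself, and `|A₂| = 1 + λ`.
-/

open Metric Filter Topology

section IteratedDeriv

variable {𝕜 : Type*} [NontriviallyNormedField 𝕜]

theorem eventuallyEq_mul_of_div_eq {u d : 𝕜 → 𝕜} {x : 𝕜} (hd : ContinuousAt d x)
    (hdx : d x ≠ 0) (h : ∀ᶠ w in 𝓝 x, u w / d w = w) : u =ᶠ[𝓝 x] fun w => w * d w := by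
  filter_upwards [h, hd.eventually_ne hdx] with w hw hdw
  rwa [div_eq_iff hdw] at hw

theorem deriv_fun_id_mul_zero {h : 𝕜 → 𝕜} (hh : DifferentiableAt 𝕜 h 0) :
    deriv (fun w => w * h w) 0 = h 0 := by
  rw [((hasDerivAt_id' (0 : 𝕜)).fun_mul hh.hasDerivAt).deriv]
  simp

theorem iteratedDeriv_two_fun_id_mul_zero {h : 𝕜 → 𝕜} (hh : ContDiffAt 𝕜 2 h 0) :
    iteratedDeriv 2 (fun w => w * h w) 0 = 2 * deriv h 0 := by
  rw [iteratedDeriv_fun_mul (f := fun w => w) contDiffAt_id hh]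
  simp [iteratedDeriv_fun_id_zero]

theorem deriv_one_sub_mul_one_sub_const_mul_zero {c : 𝕜} {v : 𝕜 → 𝕜}
    (hv : DifferentiableAt 𝕜 v 0) (hv0 : v 0 = 0) :
    deriv (fun w => (1 - v w) * (1 - c * v w)) 0 = -(1 + c) * deriv v 0 := by
  have hd := ((hasDerivAt_const 0 1).fun_sub hv.hasDerivAt).fun_mul
    ((hasDerivAt_const 0 1).fun_sub (hv.hasDerivAt.const_mul c))
  rw [hd.deriv, hv0]
  ring

theorem deriv_and_iteratedDeriv_two_of_div_eq {c : 𝕜} {u v : 𝕜 → 𝕜}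
    (hv : ContDiffAt 𝕜 2 v 0) (hv0 : v 0 = 0)
    (h : ∀ᶠ w in 𝓝 0, u w / ((1 - v w) * (1 - c * v w)) = w) :
    deriv u 0 = 1 ∧ iteratedDeriv 2 u 0 = -2 * (1 + c) * deriv v 0 := by
  set d : 𝕜 → 𝕜 := fun w => (1 - v w) * (1 - c * v w) with hd_def
  have hd : ContDiffAt 𝕜 2 d 0 :=
    (contDiffAt_const.sub hv).mul (contDiffAt_const.sub (contDiffAt_const.mul hv))
  have hd0 : d 0 = 1 := by simp [hd_def, hv0]
  have hvd : DifferentiableAt 𝕜 v 0 := hv.differentiableAt two_ne_zero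
  have hu := eventuallyEq_mul_of_div_eq hd.continuousAt (by simp [hd0]) h
  refine ⟨?_, ?_⟩
  · rw [hu.deriv_eq, deriv_fun_id_mul_zero (hd.differentiableAt two_ne_zero), hd0]
  · rw [hu.iteratedDeriv_eq, iteratedDeriv_two_fun_id_mul_zero hd,
      deriv_one_sub_mul_one_sub_const_mul_zero hvd hv0]
    ring

end IteratedDeriv

theorem Complex.norm_one_add_ofReal {x : ℝ} (hx : -1 ≤ x) : ‖(1 : ℂ) + x‖ = 1 + x := by
  rw [← Complex.ofReal_one, ← Complex.ofReal_add, Complex.norm_of_nonneg (by linarith)]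

theorem A2_bound_general (lam : ℝ) (hl0 : 0 < lam)
    (f : ℂ → ℂ)
    (ω : ℂ → ℂ)
    (hω : DifferentiableOn ℂ ω (ball (0:ℂ) 1))
    (hω0 : ω 0 = 0)
    (hωb : ∀ z ∈ ball (0:ℂ) 1, ‖ω z‖ < 1)
    (hsub : ∀ z ∈ ball (0:ℂ) 1, f z = z / ((1 - ω z) * (1 - (lam:ℂ) * ω z)))
    (g : ℂ → ℂ)
    (hg : AnalyticAt ℂ g 0) (hg0 : g 0 = 0)
    (hinv : ∀ᶠ w in nhds (0:ℂ), f (g w) = w)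
    (A₂ : ℂ) (hA₂ : A₂ = iteratedDeriv 2 g 0 / 2) :
    ‖A₂‖ ≤ 1 + lam ∧
    (∀ gl : ℂ → ℂ, AnalyticAt ℂ gl 0 → gl 0 = 0 →
      (∀ᶠ w in nhds (0:ℂ), gl w / ((1 - gl w) * (1 - (lam:ℂ) * gl w)) = w) →
      ‖iteratedDeriv 2 gl 0 / 2‖ = 1 + lam) := by
  have hnorm : ‖(1 : ℂ) + lam‖ = 1 + lam := Complex.norm_one_add_ofReal (by linarith)
  refine ⟨?_, fun gl hgl hgl0 hgl_inv => ?_⟩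
  · have hball : ball (0 : ℂ) 1 ∈ 𝓝 (g 0) := by
      rw [hg0]; exact ball_mem_nhds 0 one_pos
    have hωa : AnalyticAt ℂ ω (g 0) := hω.analyticAt hball
    have hg_ball : ∀ᶠ w in 𝓝 0, g w ∈ ball (0 : ℂ) 1 := hg.continuousAt.preimage_mem_nhds hball
    have hdiv : ∀ᶠ w in 𝓝 0, g w / ((1 - ω (g w)) * (1 - (lam:ℂ) * ω (g w))) = w := by
      filter_upwards [hinv, hg_ball] with w hw hw_ball
      rwa [hsub _ hw_ball] at hw
    obtain ⟨hg1, hg2⟩ := deriv_and_iteratedDeriv_two_of_div_eq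
      (hωa.comp hg).contDiffAt (by simp [hg0, hω0]) hdiv
    have hchain : deriv (ω ∘ g) 0 = deriv ω 0 := by
      rw [deriv_comp 0 hωa.differentiableAt hg.differentiableAt, hg0, hg1, mul_one]
    have hschwarz : ‖deriv ω 0‖ ≤ 1 :=
      Complex.norm_deriv_le_one_of_mapsTo_ball hω
        (fun z hz => by simpa [hω0] using (hωb z hz).le) one_pos
    rw [hA₂, hg2, hchain]
    calc ‖-2 * (1 + (lam : ℂ)) * deriv ω 0 / 2‖ = (1 + lam) * ‖deriv ω 0‖ := by
          rw [show -2 * (1 + (lam : ℂ)) * deriv ω 0 / 2 = -((1 + lam) * deriv ω 0) by ring,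
            norm_neg, norm_mul, hnorm]
      _ ≤ 1 + lam := mul_le_of_le_one_right (by linarith) hschwarz
  · obtain ⟨hgl1, hgl2⟩ := deriv_and_iteratedDeriv_two_of_div_eq hgl.contDiffAt hgl0 hgl_inv
    rw [hgl2, hgl1, show -2 * (1 + (lam : ℂ)) * 1 / 2 = -(1 + lam) by ring, norm_neg, hnorm]

/-- For f ∈ 𝒰(λ) with f(z)/z ≺ 1/((1-z)(1-λz)), the second coefficient of the
inverse satisfies |A₂| ≤ 1+λ, with equality for f_λ(z)=z/((1-z)(1-λz)). -/
theorem A2_bound (lam : ℝ) (hl0 : 0 < lam) (hl1 : lam ≤ 1)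
    (f : ℂ → ℂ)
    (hf : DifferentiableOn ℂ f (ball (0:ℂ) 1))
    (hf0 : f 0 = 0) (hf1 : deriv f 0 = 1)
    (hU : ∀ z ∈ ball (0:ℂ) 1, z ≠ 0 →
      ‖(z / f z) ^ 2 * deriv f z - 1‖ < lam)
    (ω : ℂ → ℂ)
    (hω : DifferentiableOn ℂ ω (ball (0:ℂ) 1))
    (hω0 : ω 0 = 0)
    (hωb : ∀ z ∈ ball (0:ℂ) 1, ‖ω z‖ < 1)
    (hsub : ∀ z ∈ ball (0:ℂ) 1, f z = z / ((1 - ω z) * (1 - (lam:ℂ) * ω z)))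
    (g : ℂ → ℂ)
    (hg : AnalyticAt ℂ g 0) (hg0 : g 0 = 0)
    (hinv : ∀ᶠ w in nhds (0:ℂ), f (g w) = w)
    (A₂ : ℂ) (hA₂ : A₂ = iteratedDeriv 2 g 0 / 2) :
    ‖A₂‖ ≤ 1 + lam ∧
    (∀ gl : ℂ → ℂ, AnalyticAt ℂ gl 0 → gl 0 = 0 →
      (∀ᶠ w in nhds (0:ℂ), gl w / ((1 - gl w) * (1 - (lam:ℂ) * gl w)) = w) →
      ‖iteratedDeriv 2 gl 0 / 2‖ = 1 + lam) :=
  A2_bound_general lam hl0 f ω hω hω0 hωb hsub g hg hg0 hinv A₂ hA₂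
end

section
/- Let 0<λ≤1 and let f ∈ 𝒰(λ). If f(z)/z = 1/((1-ω(z))(1-λω(z))) for a Schwarz function ω with coefficients c₁,c₂,c₃, then |2(1+λ)c₃ - 4λc₁c₂| ≤ λ - (1/λ)|(1+λ)c₂ - λc₁²|². -/
open Metric Complex ComplexConjugate Topology Filter Set

/-!
Write `ω = z ψ` and `z / f = F = (1 - ω)(1 - λω)`. Then `(z/f)² f' - 1 = F - z F' - 1 = z² g` with
`g = (1 + λ)ψ' - λ(ψ² + 2zψψ')` holomorphic on the disk, so the hypothesis on `f` and the Schwarz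
lemma, applied twice, give `|g| ≤ λ`. Schwarz's lemma for the Möbius transform of `g` moving `g(0)`
to `0` gives `|g'(0)| ≤ λ - |g(0)|²/λ`, which is the claim since `ψ(0) = c₁`, `ψ'(0) = c₂` and
`ψ''(0) = 2c₃`.
-/

lemma norm_sq_sub_conj_mul_sq_sub_norm_mul_sub_sq (M : ℝ) (a w : ℂ) :
    ‖(M : ℂ) ^ 2 - conj a * w‖ ^ 2 - ‖(M : ℂ) * (w - a)‖ ^ 2 =
      (M ^ 2 - ‖a‖ ^ 2) * (M ^ 2 - ‖w‖ ^ 2) := by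
  rw [Complex.sq_norm, Complex.sq_norm, Complex.sq_norm, Complex.sq_norm]
  simp only [normSq_apply, sub_re, sub_im, mul_re, mul_im, conj_re, conj_im, ofReal_re, ofReal_im,
    pow_two]
  ring

lemma norm_mul_sub_le_norm_sq_sub_conj_mul {M : ℝ} {a w : ℂ} (ha : ‖a‖ ≤ M) (hw : ‖w‖ ≤ M) :
    ‖(M : ℂ) * (w - a)‖ ≤ ‖(M : ℂ) ^ 2 - conj a * w‖ := by
  have hM : 0 ≤ M := (norm_nonneg a).trans ha
  have ha2 : ‖a‖ ^ 2 ≤ M ^ 2 := by gcongr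
  have hw2 : ‖w‖ ^ 2 ≤ M ^ 2 := by gcongr
  rw [← sq_le_sq₀ (norm_nonneg _) (norm_nonneg _)]
  nlinarith [norm_sq_sub_conj_mul_sq_sub_norm_mul_sub_sq M a w]

lemma sq_sub_conj_mul_ne_zero {M : ℝ} {a w : ℂ} (ha : ‖a‖ < M) (hw : ‖w‖ ≤ M) :
    (M : ℂ) ^ 2 - conj a * w ≠ 0 := by
  have hM : 0 < M := (norm_nonneg a).trans_lt ha
  refine sub_ne_zero.2 fun h => ?_
  have : ‖conj a * w‖ < M ^ 2 := by
    rw [norm_mul, RCLike.norm_conj, sq]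
    exact mul_lt_mul_of_lt_of_le_of_nonneg_of_pos ha hw (norm_nonneg _) hM
  rw [← h, norm_pow, norm_real, Real.norm_of_nonneg hM.le] at this
  exact this.false

theorem norm_deriv_zero_le_sub_of_norm_le {g : ℂ → ℂ} {M : ℝ} (hM : 0 < M)
    (hg : DifferentiableOn ℂ g (ball 0 1)) (hgM : ∀ z ∈ ball (0 : ℂ) 1, ‖g z‖ ≤ M) :
    ‖deriv g 0‖ ≤ M - 1 / M * ‖g 0‖ ^ 2 := by
  have h0 : (0 : ℂ) ∈ ball (0 : ℂ) 1 := mem_ball_self one_pos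
  have hdiff : ∀ᶠ z in 𝓝 0, DifferentiableAt ℂ g z :=
    eventually_of_mem (ball_mem_nhds 0 one_pos) fun z hz =>
      hg.differentiableAt (isOpen_ball.mem_nhds hz)
  rcases (hgM 0 h0).eq_or_lt with hmax | hlt
  · have hloc : IsLocalMax (norm ∘ g) 0 :=
      eventually_of_mem (ball_mem_nhds 0 one_pos) fun z hz => (hgM z hz).trans_eq hmax.symm
    have hconst : g =ᶠ[𝓝 0] fun _ => g 0 := Complex.eventually_eq_of_isLocalMax_norm hdiff hloc
    rw [hconst.deriv_eq, deriv_const, hmax]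
    field_simp
    simp
  set a := g 0
  set H : ℂ → ℂ := fun z => M * (g z - a) / (M ^ 2 - conj a * g z)
  have hden : ∀ z ∈ ball (0 : ℂ) 1, (M : ℂ) ^ 2 - conj a * g z ≠ 0 := fun z hz =>
    sq_sub_conj_mul_ne_zero hlt (hgM z hz)
  have hH : DifferentiableOn ℂ H (ball 0 1) :=
    ((hg.sub_const a).const_mul _).div ((hg.const_mul _).const_sub _) hden
  have hHmaps : MapsTo H (ball 0 1) (closedBall (H 0) 1) := fun z hz => by
    simp only [H, a, sub_self, mul_zero, zero_div, mem_closedBall, dist_zero_right, norm_div]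
    exact div_le_one_of_le₀ (norm_mul_sub_le_norm_sq_sub_conj_mul hlt.le (hgM z hz))
      (norm_nonneg _)
  have hpos : 0 < M ^ 2 - ‖a‖ ^ 2 := by nlinarith [norm_nonneg a]
  have hHd : HasDerivAt H (M * deriv g 0 / (M ^ 2 - ‖a‖ ^ 2 : ℝ)) 0 := by
    have hgd : HasDerivAt g (deriv g 0) 0 := hdiff.self_of_nhds.hasDerivAt
    refine (((hgd.sub_const a).const_mul (M : ℂ)).div ((hgd.const_mul (conj a)).const_sub _)
      (hden 0 h0)).congr_deriv ?_
    have hden0 : (M : ℂ) ^ 2 - conj a * a ≠ 0 := hden 0 h0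
    rw [ofReal_sub, ofReal_pow, ofReal_pow, ← conj_mul', show g 0 = a from rfl]
    field_simp
    ring
  have hS := norm_deriv_le_div_of_mapsTo_ball hH hHmaps one_pos
  rw [hHd.deriv, norm_div, norm_mul, norm_real, norm_real, Real.norm_of_nonneg hM.le,
    Real.norm_of_nonneg hpos.le, div_one, div_le_one hpos] at hS
  rw [one_div_mul_eq_div, le_sub_iff_add_le, ← le_sub_iff_add_le', div_le_iff₀ hM]
  nlinarith

theorem iteratedDeriv_dslope_self {𝕜 : Type*} [NontriviallyNormedField 𝕜] [CompleteSpace 𝕜]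
    [CharZero 𝕜] {f : 𝕜 → 𝕜} {x : 𝕜} (hf : AnalyticAt 𝕜 f x) (n : ℕ) :
    iteratedDeriv n (dslope f x) x = iteratedDeriv (n + 1) f x / (n + 1) := by
  have hslope := hf.hasFPowerSeriesAt.has_fpower_series_dslope_fslope
  have hcoeff := congrArg (·.coeff n)
    (hslope.analyticAt.hasFPowerSeriesAt.eq_formalMultilinearSeries hslope)
  simp only [FormalMultilinearSeries.coeff_fslope, FormalMultilinearSeries.coeff_ofScalars,
    Nat.factorial_succ, Nat.cast_mul] at hcoeff
  have hfac : (n.factorial : 𝕜) ≠ 0 := Nat.cast_ne_zero.2 n.factorial_ne_zero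
  field_simp at hcoeff
  rw [eq_div_iff (Nat.cast_add_one_ne_zero n)]
  exact_mod_cast hcoeff

lemma norm_le_div_of_norm_smul_le {E : Type*} [NormedAddCommGroup E] [NormedSpace ℂ E]
    {g : ℂ → E} {R M : ℝ} (hg : DifferentiableOn ℂ g (ball 0 R))
    (hgM : ∀ z ∈ ball (0 : ℂ) R, ‖z • g z‖ ≤ M) {z : ℂ} (hz : z ∈ ball 0 R) :
    ‖g z‖ ≤ M / R := by
  have hdslope : dslope (fun w => w • g w) 0 z = g z := by
    rcases eq_or_ne z 0 with rfl | hz0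
    · rw [dslope_same]
      have h : HasDerivAt (fun w => w • g w) ((0 : ℂ) • deriv g 0 + (1 : ℂ) • g 0) 0 :=
        (hasDerivAt_id' 0).smul (hg.differentiableAt (isOpen_ball.mem_nhds hz)).hasDerivAt
      simpa using h.deriv
    · simpa using dslope_sub_smul_of_ne g hz0
  rw [← hdslope]
  exact norm_dslope_le_div_of_mapsTo_ball (differentiableOn_id.smul hg)
    (fun w hw => by simpa using hgM w hw) hz

lemma norm_le_of_norm_sq_mul_le {g : ℂ → ℂ} {M : ℝ} (hg : DifferentiableOn ℂ g (ball 0 1))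
    (hgM : ∀ z ∈ ball (0 : ℂ) 1, ‖z ^ 2 * g z‖ ≤ M) {z : ℂ} (hz : z ∈ ball 0 1) :
    ‖g z‖ ≤ M := by
  have hzg : ∀ w ∈ ball (0 : ℂ) 1, ‖w • g w‖ ≤ M := fun w hw => by
    simpa using norm_le_div_of_norm_smul_le (differentiableOn_id.smul hg)
      (fun u hu => by simpa [sq, mul_assoc] using hgM u hu) hw
  simpa using norm_le_div_of_norm_smul_le hg hzg hz

lemma one_sub_mul_one_sub_ofReal_mul_ne_zero {lam : ℝ} (hl0 : 0 ≤ lam) (hl1 : lam ≤ 1) {u : ℂ}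
    (hu : ‖u‖ < 1) : (1 - u) * (1 - lam * u) ≠ 0 := by
  have hne : ∀ v : ℂ, ‖v‖ < 1 → 1 - v ≠ 0 := fun v hv => sub_ne_zero.2 fun h => by
    simp [← h] at hv
  refine mul_ne_zero (hne u hu) (hne _ ?_)
  rw [norm_mul, norm_real, Real.norm_of_nonneg hl0]
  nlinarith [norm_nonneg u]

/-- `z ^ 2 * uRemainder lam ψ z = F z - z * F' z - 1` for `F z = (1 - z ψ z) (1 - lam z ψ z)`. -/
noncomputable def uRemainder (lam : ℂ) (ψ : ℂ → ℂ) (z : ℂ) : ℂ :=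
  (1 + lam) * deriv ψ z - lam * (ψ z ^ 2 + 2 * z * ψ z * deriv ψ z)

section uRemainder

variable {lam : ℂ} {ψ : ℂ → ℂ}

lemma differentiableOn_uRemainder {s : Set ℂ} (hψ : DifferentiableOn ℂ ψ s) (hs : IsOpen s) :
    DifferentiableOn ℂ (uRemainder lam ψ) s := by
  have hψ' : DifferentiableOn ℂ (deriv ψ) s := hψ.deriv hs
  unfold uRemainder
  fun_prop

lemma uRemainder_zero : uRemainder lam ψ 0 = (1 + lam) * deriv ψ 0 - lam * ψ 0 ^ 2 := by
  simp [uRemainder]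

lemma deriv_uRemainder_zero (hψ : AnalyticAt ℂ ψ 0) :
    deriv (uRemainder lam ψ) 0 =
      (1 + lam) * iteratedDeriv 2 ψ 0 - 4 * lam * ψ 0 * deriv ψ 0 := by
  have h₀ : HasDerivAt ψ (deriv ψ 0) 0 := hψ.differentiableAt.hasDerivAt
  have h₁ : HasDerivAt (deriv ψ) (iteratedDeriv 2 ψ 0) 0 := by
    rw [iteratedDeriv_succ, iteratedDeriv_one]
    exact hψ.deriv.differentiableAt.hasDerivAt
  have h : HasDerivAt (uRemainder lam ψ) _ 0 := (h₁.const_mul (1 + lam)).sub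
    (((h₀.pow 2).add ((((hasDerivAt_id' 0).const_mul 2).mul h₀).mul h₁)).const_mul lam)
  rw [h.deriv]
  simp
  ring

lemma sq_div_mul_deriv_sub_one_eq {f : ℂ → ℂ} {z : ℂ} (hz : z ≠ 0)
    (hψ : DifferentiableAt ℂ ψ z) (hF : (1 - z * ψ z) * (1 - lam * (z * ψ z)) ≠ 0)
    (hf : f =ᶠ[𝓝 z] fun w => w / ((1 - w * ψ w) * (1 - lam * (w * ψ w)))) :
    (z / f z) ^ 2 * deriv f z - 1 = z ^ 2 * uRemainder lam ψ z := by
  have hω : HasDerivAt (fun w => w * ψ w) (1 * ψ z + z * deriv ψ z) z :=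
    (hasDerivAt_id' z).mul hψ.hasDerivAt
  have hF' : HasDerivAt (fun w => (1 - w * ψ w) * (1 - lam * (w * ψ w))) _ z :=
    (hω.const_sub 1).mul ((hω.const_mul lam).const_sub 1)
  rw [((hasDerivAt_id' z).div hF' hF).congr_of_eventuallyEq hf |>.deriv, hf.eq_of_nhds,
    div_div_cancel₀ hz, mul_div_cancel₀ _ (pow_ne_zero 2 hF), uRemainder]
  ring

end uRemainder

theorem third_coeff_inequality_general (lam : ℝ) (hl0 : 0 < lam) (hl1 : lam ≤ 1)
    (f : ℂ → ℂ)
    (hU : ∀ z ∈ ball (0:ℂ) 1, z ≠ 0 →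
      ‖(z / f z) ^ 2 * deriv f z - 1‖ < lam)
    (ω : ℂ → ℂ)
    (hω : DifferentiableOn ℂ ω (ball (0:ℂ) 1))
    (hω0 : ω 0 = 0)
    (hωb : ∀ z ∈ ball (0:ℂ) 1, ‖ω z‖ < 1)
    (hsub : ∀ z ∈ ball (0:ℂ) 1, f z = z / ((1 - ω z) * (1 - (lam:ℂ) * ω z)))
    (c₁ c₂ c₃ : ℂ)
    (hc₁ : c₁ = deriv ω 0)
    (hc₂ : c₂ = iteratedDeriv 2 ω 0 / 2)
    (hc₃ : c₃ = iteratedDeriv 3 ω 0 / 6) :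
    ‖2 * (1 + (lam:ℂ)) * c₃ - 4 * (lam:ℂ) * c₁ * c₂‖ ≤
      lam - (1 / lam) * ‖(1 + (lam:ℂ)) * c₂ - (lam:ℂ) * c₁ ^ 2‖ ^ 2 := by
  set ψ := dslope ω 0
  have hdisk : ball (0 : ℂ) 1 ∈ 𝓝 0 := ball_mem_nhds 0 one_pos
  have hψ : DifferentiableOn ℂ ψ (ball 0 1) := (differentiableOn_dslope hdisk).2 hω
  have hωψ : ∀ z, ω z = z * ψ z := fun z => by simpa [hω0] using (sub_smul_dslope ω 0 z).symm
  have hωA : AnalyticAt ℂ ω 0 := hω.analyticAt hdisk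
  have e₁ : ψ 0 = c₁ := hc₁ ▸ dslope_same ω 0
  have e₂ : deriv ψ 0 = c₂ := by
    rw [← iteratedDeriv_one, iteratedDeriv_dslope_self hωA 1, hc₂]; norm_num
  have e₃ : iteratedDeriv 2 ψ 0 = 2 * c₃ := by
    rw [iteratedDeriv_dslope_self hωA 2, hc₃]; ring
  have hR : DifferentiableOn ℂ (uRemainder lam ψ) (ball 0 1) :=
    differentiableOn_uRemainder hψ isOpen_ball
  have hRbound : ∀ z ∈ ball (0 : ℂ) 1, ‖z ^ 2 * uRemainder lam ψ z‖ ≤ lam := by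
    intro z hz
    rcases eq_or_ne z 0 with rfl | hz0
    · simpa using hl0.le
    rw [← sq_div_mul_deriv_sub_one_eq hz0 (hψ.differentiableAt (isOpen_ball.mem_nhds hz)) ?_ ?_]
    · exact (hU z hz hz0).le
    · rw [← hωψ]; exact one_sub_mul_one_sub_ofReal_mul_ne_zero hl0.le hl1 (hωb z hz)
    · filter_upwards [isOpen_ball.mem_nhds hz] with w hw
      rw [hsub w hw, hωψ]
  have hSP := norm_deriv_zero_le_sub_of_norm_le hl0 hR fun z hz =>
    norm_le_of_norm_sq_mul_le hR hRbound hz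
  rw [deriv_uRemainder_zero (hψ.analyticAt hdisk), uRemainder_zero, e₁, e₂, e₃] at hSP
  convert hSP using 2
  ring

/-- For f ∈ 𝒰(λ) with representation f(z)/z = 1/((1-ω(z))(1-λω(z))),
|2(1+λ)c₃ - 4λc₁c₂| ≤ λ - (1/λ)|(1+λ)c₂ - λc₁²|². -/
theorem third_coeff_inequality (lam : ℝ) (hl0 : 0 < lam) (hl1 : lam ≤ 1)
    (f : ℂ → ℂ)
    (hf : DifferentiableOn ℂ f (ball (0:ℂ) 1))
    (hf0 : f 0 = 0) (hf1 : deriv f 0 = 1)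
    (hU : ∀ z ∈ ball (0:ℂ) 1, z ≠ 0 →
      ‖(z / f z) ^ 2 * deriv f z - 1‖ < lam)
    (ω : ℂ → ℂ)
    (hω : DifferentiableOn ℂ ω (ball (0:ℂ) 1))
    (hω0 : ω 0 = 0)
    (hωb : ∀ z ∈ ball (0:ℂ) 1, ‖ω z‖ < 1)
    (hsub : ∀ z ∈ ball (0:ℂ) 1, f z = z / ((1 - ω z) * (1 - (lam:ℂ) * ω z)))
    (c₁ c₂ c₃ : ℂ)
    (hc₁ : c₁ = deriv ω 0)
    (hc₂ : c₂ = iteratedDeriv 2 ω 0 / 2)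
    (hc₃ : c₃ = iteratedDeriv 3 ω 0 / 6) :
    ‖2 * (1 + (lam:ℂ)) * c₃ - 4 * (lam:ℂ) * c₁ * c₂‖ ≤
      lam - (1 / lam) * ‖(1 + (lam:ℂ)) * c₂ - (lam:ℂ) * c₁ ^ 2‖ ^ 2 :=
  third_coeff_inequality_general lam hl0 hl1 f hU ω hω hω0 hωb hsub c₁ c₂ c₃ hc₁ hc₂ hc₃
end

section
/- Let 0<λ≤1 and define h(t) = λ - t²/λ + 6(1+λ)x t + 2(1+λ)³x³ for fixed x ∈ [0,1] and t ∈ [0,λ]. Then h(t) ≤ 2(1+λ)(1+5λ+λ²) for all such x and t. -/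
/-- The optimization step in bounding |A₄|:
h(t) = λ - t²/λ + 6(1+λ)xt + 2(1+λ)³x³ ≤ 2(1+λ)(1+5λ+λ²) for x∈[0,1], t∈[0,λ]. -/
theorem h_max_bound (lam : ℝ) (hl0 : 0 < lam) (hl1 : lam ≤ 1)
    (x t : ℝ) (hx0 : 0 ≤ x) (hx1 : x ≤ 1) (ht0 : 0 ≤ t) (ht1 : t ≤ lam) :
    lam - t^2 / lam + 6*(1+lam)*x*t + 2*(1+lam)^3*x^3 ≤
      2*(1+lam)*(1+5*lam+lam^2) := by
  have h3 : 2*t - lam ≤ t^2 / lam := by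
    rw [le_div_iff₀ hl0]
    nlinarith [sq_nonneg (t - lam)]
  have h1 : 6*(1+lam)*x*t ≤ 6*(1+lam)*t := by
    nlinarith [mul_nonneg (sub_nonneg.2 hx1) ht0]
  have h2 : 2*(1+lam)^3*x^3 ≤ 2*(1+lam)^3 := by
    have : x^3 ≤ 1 := by nlinarith [mul_nonneg hx0 hx0, mul_nonneg (mul_nonneg hx0 hx0) hx0]
    nlinarith [pow_pos (by linarith : (0:ℝ) < 1 + lam) 3]
  nlinarith [h3, h1, h2]
end

section
/- Let 0<λ≤1, μ ∈ ℂ, and let c₁,c₂ ∈ ℂ satisfy |c₁|≤1 and |(1+λ)c₂-λc₁²| ≤ λ. Set A₂ = -(1+λ)c₁ and A₃ = -(1+λ)c₂+(1+3λ+λ²)c₁². Then |A₃ - μA₂²| ≤ λ + |1-μ|(1+λ)². -/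
/-- Fekete–Szegő inequality for inverse coefficients:
|A₃ - μA₂²| ≤ λ + |1-μ|(1+λ)². -/
theorem fekete_szego (lam : ℝ) (hl0 : 0 < lam) (hl1 : lam ≤ 1)
    (μ : ℂ) (c₁ c₂ : ℂ)
    (h1 : ‖c₁‖ ≤ 1)
    (h2 : ‖(1 + (lam:ℂ)) * c₂ - (lam:ℂ) * c₁ ^ 2‖ ≤ lam)
    (A₂ A₃ : ℂ)
    (hA₂ : A₂ = -(1 + (lam:ℂ)) * c₁)
    (hA₃ : A₃ = -(1 + (lam:ℂ)) * c₂ + (1 + 3*(lam:ℂ) + (lam:ℂ)^2) * c₁ ^ 2) :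
    ‖A₃ - μ * A₂ ^ 2‖ ≤ lam + ‖1 - μ‖ * (1 + lam) ^ 2 := by
  have key : A₃ - μ * A₂ ^ 2
      = -((1 + (lam:ℂ)) * c₂ - (lam:ℂ) * c₁ ^ 2)
        + (1 - μ) * (1 + (lam:ℂ))^2 * c₁ ^ 2 := by
    rw [hA₂, hA₃]; ring
  rw [key]
  calc ‖-((1 + (lam:ℂ)) * c₂ - (lam:ℂ) * c₁ ^ 2) + (1 - μ) * (1 + (lam:ℂ))^2 * c₁ ^ 2‖
      ≤ ‖-((1 + (lam:ℂ)) * c₂ - (lam:ℂ) * c₁ ^ 2)‖ + ‖(1 - μ) * (1 + (lam:ℂ))^2 * c₁ ^ 2‖ :=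
        norm_add_le _ _
    _ ≤ lam + ‖1 - μ‖ * (1 + lam) ^ 2 := by
        rw [norm_neg]
        gcongr
        have hn : ‖(1 + (lam:ℂ))‖ = 1 + lam := by
          rw [show (1 + (lam:ℂ)) = ((1 + lam : ℝ) : ℂ) by push_cast; ring,
            Complex.norm_real, Real.norm_eq_abs, abs_of_pos (by linarith)]
        have : ‖(1 - μ) * (1 + (lam:ℂ))^2 * c₁ ^ 2‖
            = ‖1 - μ‖ * (1 + lam)^2 * ‖c₁‖^2 := by
          rw [norm_mul, norm_mul, norm_pow, norm_pow, hn]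
        rw [this]
        have hc : ‖c₁‖^2 ≤ 1 := by nlinarith [norm_nonneg c₁]
        nlinarith [norm_nonneg (1 - μ), sq_nonneg (1+lam),
          mul_nonneg (norm_nonneg (1 - μ)) (sq_nonneg (1+lam))]
end
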